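/- arXiv:0804.0059 — 2 statements merged into one kernel-verified Lean document; each statement's English description precedes it below -/
import Mathlib

section
/- Let f, g : ℝ → ℝ each be differentiable on a neighborhood of 0 with derivative differentiable at 0. Suppose f(t)² ≤ g(t) for all t in a neighborhood of 0, f(0)² = g(0), f(0) > 0, deriv g 0 = 0, and deriv (deriv g) 0 < 0. Then deriv f 0 = 0 and deriv (deriv f) 0 < 0. -/
open Filter Set Topology

/-- Second derivative test (necessary direction): at a local minimum, the second
derivative is nonnegative. -/
lemma second_deriv_nonneg_of_isLocalMin
    (h : ℝ → ℝ)
    (hdiff : ∀ᶠ t in nhds (0 : ℝ), DifferentiableAt ℝ h t)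
    (hmin : IsLocalMin h 0)
    (h'0 : deriv h 0 = 0)
    (hd2 : DifferentiableAt ℝ (deriv h) 0) :
    0 ≤ deriv (deriv h) 0 := by
  by_contra hneg
  push_neg at hneg
  -- the slope of `deriv h` at `0` tends to a negative number
  have hslope : Tendsto (slope (deriv h) 0) (𝓝[≠] (0:ℝ)) (𝓝 (deriv (deriv h) 0)) :=
    hasDerivAt_iff_tendsto_slope.mp hd2.hasDerivAt
  have hev : ∀ᶠ t in 𝓝[≠] (0:ℝ), slope (deriv h) 0 t < 0 :=
    hslope.eventually (eventually_lt_nhds hneg)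
  rw [eventually_nhdsWithin_iff] at hev
  have big : ∀ᶠ t in nhds (0:ℝ),
      (DifferentiableAt ℝ h t ∧ h 0 ≤ h t) ∧ (t ∈ ({(0:ℝ)}ᶜ : Set ℝ) → slope (deriv h) 0 t < 0) :=
    (hdiff.and hmin).and hev
  rw [Metric.eventually_nhds_iff] at big
  obtain ⟨δ, hδ, hδ'⟩ := big
  set b : ℝ := δ / 2 with hb
  have hb0 : 0 < b := by positivity
  have hmem : ∀ t ∈ Icc (0:ℝ) b, dist t 0 < δ := by
    intro t ht
    rw [Real.dist_eq, sub_zero, abs_of_nonneg ht.1]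
    linarith [ht.2]
  have hdiffI : ∀ t ∈ Icc (0:ℝ) b, DifferentiableAt ℝ h t := fun t ht => (hδ' (hmem t ht)).1.1
  obtain ⟨c, hc, hceq⟩ := exists_deriv_eq_slope h hb0
    (fun t ht => (hdiffI t ht).continuousAt.continuousWithinAt)
    (fun t ht => (hdiffI t (Ioo_subset_Icc_self ht)).differentiableWithinAt)
  have hcball : dist c 0 < δ := hmem c (Ioo_subset_Icc_self hc)
  have hcslope : slope (deriv h) 0 c < 0 := (hδ' hcball).2 (ne_of_gt hc.1)
  have hc' : deriv h c < 0 := by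
    have := hcslope
    rw [slope_def_field, h'0] at this
    have hcpos : 0 < c := hc.1
    rw [div_neg_iff] at this
    rcases this with ⟨h1, h2⟩ | ⟨h1, h2⟩
    · simp at h1; linarith
    · simpa using h1
  have hbmin : h 0 ≤ h b := (hδ' (hmem b (right_mem_Icc.mpr hb0.le))).1.2
  rw [hceq] at hc'
  rcases div_neg_iff.mp hc' with ⟨_, h2⟩ | ⟨h1, _⟩
  · linarith
  · linarith

/-- Comparison of second-order behaviour: if `f(t)² ≤ g(t)` near `0`, with equality at `0`,
`f 0 > 0`, `g' 0 = 0` and `g'' 0 < 0`, then `f' 0 = 0` and `f'' 0 < 0`. -/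
theorem deriv_comparison_sq
    (f g : ℝ → ℝ)
    (hf : ∀ᶠ t in nhds (0 : ℝ), DifferentiableAt ℝ f t)
    (hf2 : DifferentiableAt ℝ (deriv f) 0)
    (hg : ∀ᶠ t in nhds (0 : ℝ), DifferentiableAt ℝ g t)
    (hg2 : DifferentiableAt ℝ (deriv g) 0)
    (hle : ∀ᶠ t in nhds (0 : ℝ), f t ^ 2 ≤ g t)
    (heq : f 0 ^ 2 = g 0)
    (hfpos : 0 < f 0)
    (hg' : deriv g 0 = 0)
    (hg'' : deriv (deriv g) 0 < 0) :
    deriv f 0 = 0 ∧ deriv (deriv f) 0 < 0 := by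
  set h : ℝ → ℝ := fun t => g t - f t ^ 2 with hh
  have hf0 : DifferentiableAt ℝ f 0 := hf.self_of_nhds
  have hg0 : DifferentiableAt ℝ g 0 := hg.self_of_nhds
  -- h is differentiable near 0
  have hdiff : ∀ᶠ t in nhds (0 : ℝ), DifferentiableAt ℝ h t := by
    filter_upwards [hf, hg] with t hft hgt
    exact hgt.sub (hft.pow 2)
  -- eventual formula for deriv h
  have hderiv : ∀ᶠ t in nhds (0 : ℝ), deriv h t = deriv g t - 2 * f t * deriv f t := by
    filter_upwards [hf, hg] with t hft hgt
    have : HasDerivAt h (deriv g t - 2 * f t ^ 1 * deriv f t) t :=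
      hgt.hasDerivAt.sub ((hft.hasDerivAt.pow 2).congr_deriv (by push_cast; ring))
    simpa using this.deriv
  have hderiv0 : deriv h 0 = deriv g 0 - 2 * f 0 * deriv f 0 := hderiv.self_of_nhds
  -- local min
  have hmin : IsLocalMin h 0 := by
    have h00 : h 0 = 0 := by simp [hh, heq]
    rw [IsLocalMin, IsMinFilter, h00]
    filter_upwards [hle] with t hlt
    simp [hh]; linarith
  have h'0 : deriv h 0 = 0 := hmin.deriv_eq_zero
  have hf'0 : deriv f 0 = 0 := by
    rw [hderiv0, hg'] at h'0
    nlinarith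
  refine ⟨hf'0, ?_⟩
  -- second derivative of h
  have hRHSdiff : DifferentiableAt ℝ (fun t => deriv g t - 2 * f t * deriv f t) 0 :=
    hg2.sub (((differentiableAt_const 2).mul hf0).mul hf2)
  have hd2 : DifferentiableAt ℝ (deriv h) 0 :=
    hRHSdiff.congr_of_eventuallyEq hderiv
  have hderiv2 : deriv (deriv h) 0 =
      deriv (deriv g) 0 - 2 * f 0 * deriv (deriv f) 0 := by
    have e1 : deriv (deriv h) 0 = deriv (fun t => deriv g t - 2 * f t * deriv f t) 0 :=
      Filter.EventuallyEq.deriv_eq hderiv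
    have hprod : HasDerivAt (fun t => 2 * f t * deriv f t)
        (2 * deriv f 0 * deriv f 0 + 2 * f 0 * deriv (deriv f) 0) 0 := by
      have := (hf0.hasDerivAt.const_mul (2:ℝ)).mul hf2.hasDerivAt
      exact this
    have h2 : HasDerivAt (fun t => deriv g t - 2 * f t * deriv f t)
        (deriv (deriv g) 0 - (2 * deriv f 0 * deriv f 0 + 2 * f 0 * deriv (deriv f) 0)) 0 :=
      hg2.hasDerivAt.sub hprod
    rw [e1, h2.deriv, hf'0]
    ring
  have hnn : 0 ≤ deriv (deriv h) 0 :=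
    second_deriv_nonneg_of_isLocalMin h hdiff hmin h'0 hd2
  rw [hderiv2] at hnn
  nlinarith
end

section
/- Let V be a real normed vector space, x₀ ∈ V, and let f, g : V → ℝ each be differentiable on a neighborhood of x₀ with first derivative differentiable at x₀. Suppose f(x) ≤ g(x) for all x in a neighborhood of x₀, f(x₀) = g(x₀), fderiv ℝ g x₀ = 0, and (fderiv ℝ (fderiv ℝ g) x₀ v) v < 0 for every v ≠ 0. Then fderiv ℝ f x₀ = 0 and (fderiv ℝ (fderiv ℝ f) x₀ v) v < 0 for every v ≠ 0. -/
lemma second_deriv_nonneg_of_isLocalMin_s4 {φ : ℝ → ℝ} {c : ℝ}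
    (hφ : ∀ᶠ t in nhds (0:ℝ), DifferentiableAt ℝ φ t)
    (hmin : IsLocalMin φ 0)
    (hc : HasDerivAt (deriv φ) c 0) : 0 ≤ c := by
  by_contra hlt
  push_neg at hlt
  have h0 : deriv φ 0 = 0 := hmin.deriv_eq_zero
  have hs : Filter.Tendsto (fun t => t⁻¹ * deriv φ t) (nhdsWithin 0 {(0:ℝ)}ᶜ) (nhds c) := by
    have := hasDerivAt_iff_tendsto_slope.mp hc
    simpa [slope_fun_def, h0] using this
  have hneg : ∀ᶠ t in nhdsWithin 0 {(0:ℝ)}ᶜ, t⁻¹ * deriv φ t < 0 :=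
    hs.eventually_lt_const hlt
  have hneg' : ∀ᶠ t in nhds (0:ℝ), t ∈ Set.Ioi (0:ℝ) → deriv φ t < 0 := by
    have h2 : ∀ᶠ t in nhdsWithin 0 (Set.Ioi (0:ℝ)), t⁻¹ * deriv φ t < 0 :=
      nhdsWithin_mono 0 (fun t (ht : t ∈ Set.Ioi 0) => ne_of_gt ht) hneg
    have h3 : ∀ᶠ t in nhdsWithin 0 (Set.Ioi (0:ℝ)), deriv φ t < 0 := by
      filter_upwards [h2, self_mem_nhdsWithin] with t h1 (ht : t ∈ Set.Ioi 0)
      by_contra hge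
      push_neg at hge
      have : 0 ≤ t⁻¹ * deriv φ t := mul_nonneg (inv_nonneg.mpr (le_of_lt ht)) hge
      linarith
    exact eventually_nhdsWithin_iff.mp h3
  obtain ⟨ε, hε, hball⟩ := Metric.eventually_nhds_iff.mp ((hφ.and hmin).and hneg')
  set δ := ε / 2 with hδdef
  have hδ : 0 < δ := by positivity
  have hmem : ∀ t ∈ Set.Icc (0:ℝ) δ, dist t 0 < ε := by
    intro t ht
    rw [Real.dist_eq, sub_zero, abs_of_nonneg ht.1]
    calc t ≤ δ := ht.2
    _ < ε := by simp [hδdef]; linarith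
  have hcont : ContinuousOn φ (Set.Icc 0 δ) := fun t ht =>
    ((hball (hmem t ht)).1.1.continuousAt).continuousWithinAt
  have hderiv : ∀ t ∈ interior (Set.Icc (0:ℝ) δ), deriv φ t < 0 := by
    intro t ht
    rw [interior_Icc] at ht
    exact (hball (hmem t ⟨le_of_lt ht.1, le_of_lt ht.2⟩)).2 ht.1
  have hanti := strictAntiOn_of_deriv_neg (convex_Icc 0 δ) hcont hderiv
  have h1 : φ δ < φ 0 := hanti ⟨le_rfl, le_of_lt hδ⟩ ⟨le_of_lt hδ, le_rfl⟩ hδ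
  have h2 : φ 0 ≤ φ δ := (hball (hmem δ ⟨le_of_lt hδ, le_rfl⟩)).1.2
  linarith

/-- If `f ≤ g` near `x₀` with equality at `x₀`, and `g` is Morse at the local
maximum `x₀` (vanishing first derivative and negative definite Hessian),
then so is `f`. -/
theorem morse_at_max_of_le
    {V : Type*} [NormedAddCommGroup V] [NormedSpace ℝ V]
    (x₀ : V) (f g : V → ℝ)
    (hf : ∀ᶠ x in nhds x₀, DifferentiableAt ℝ f x)
    (hf2 : DifferentiableAt ℝ (fderiv ℝ f) x₀)
    (hg : ∀ᶠ x in nhds x₀, DifferentiableAt ℝ g x)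
    (hg2 : DifferentiableAt ℝ (fderiv ℝ g) x₀)
    (hle : ∀ᶠ x in nhds x₀, f x ≤ g x)
    (heq : f x₀ = g x₀)
    (hg' : fderiv ℝ g x₀ = 0)
    (hg'' : ∀ v : V, v ≠ 0 → fderiv ℝ (fderiv ℝ g) x₀ v v < 0) :
    fderiv ℝ f x₀ = 0 ∧ ∀ v : V, v ≠ 0 → fderiv ℝ (fderiv ℝ f) x₀ v v < 0 := by
  set h : V → ℝ := fun x => g x - f x with hhdef
  have hfx₀ : DifferentiableAt ℝ f x₀ := hf.self_of_nhds
  have hgx₀ : DifferentiableAt ℝ g x₀ := hg.self_of_nhds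
  have hdh : ∀ᶠ x in nhds x₀, DifferentiableAt ℝ h x := by
    filter_upwards [hg, hf] with x a b; exact a.sub b
  have hmin : IsLocalMin h x₀ := by
    filter_upwards [hle] with x hx
    simp only [hhdef]
    linarith [heq]
  have hd1 : fderiv ℝ h x₀ = 0 := hmin.fderiv_eq_zero
  have hd1' : fderiv ℝ h x₀ = fderiv ℝ g x₀ - fderiv ℝ f x₀ := fderiv_sub hgx₀ hfx₀
  have hf' : fderiv ℝ f x₀ = 0 := by
    rw [hd1', hg'] at hd1
    have := sub_eq_zero.mp hd1
    simpa using this.symm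
  refine ⟨hf', ?_⟩
  -- eventual formula for fderiv h
  have heven : fderiv ℝ h =ᶠ[nhds x₀] fun x => fderiv ℝ g x - fderiv ℝ f x := by
    filter_upwards [hg, hf] with x a b
    exact fderiv_sub a b
  have hdh2 : DifferentiableAt ℝ (fderiv ℝ h) x₀ :=
    (hg2.sub hf2).congr_of_eventuallyEq heven
  have hH : fderiv ℝ (fderiv ℝ h) x₀ =
      fderiv ℝ (fderiv ℝ g) x₀ - fderiv ℝ (fderiv ℝ f) x₀ := by
    rw [heven.fderiv_eq]
    exact fderiv_sub hg2 hf2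
  intro v hv
  -- the line through x₀ in direction v
  have hlineC : Continuous fun t : ℝ => x₀ + t • v := by continuity
  have hline0 : (fun t : ℝ => x₀ + t • v) 0 = x₀ := by simp
  have htend : Filter.Tendsto (fun t : ℝ => x₀ + t • v) (nhds 0) (nhds x₀) := by
    simpa using hlineC.tendsto 0
  have hL : ∀ t : ℝ, HasDerivAt (fun s : ℝ => x₀ + s • v) v t := by
    intro t
    simpa using ((hasDerivAt_id t).smul_const v).const_add x₀
  set φ : ℝ → ℝ := fun t => h (x₀ + t • v) with hφdef
  have hφd : ∀ᶠ t in nhds (0:ℝ), HasDerivAt φ (fderiv ℝ h (x₀ + t • v) v) t := by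
    filter_upwards [htend.eventually hdh] with t hd
    exact hd.hasFDerivAt.comp_hasDerivAt t (hL t)
  have hφdiff : ∀ᶠ t in nhds (0:ℝ), DifferentiableAt ℝ φ t := by
    filter_upwards [hφd] with t hd; exact hd.differentiableAt
  have hφderiv : deriv φ =ᶠ[nhds (0:ℝ)] fun t => fderiv ℝ h (x₀ + t • v) v := by
    filter_upwards [hφd] with t hd; exact hd.deriv
  have hminφ : IsLocalMin φ 0 := by
    have := htend.eventually hmin
    simpa [hφdef, IsLocalMin, IsMinFilter, hline0] using this
  -- second derivative of φ at 0
  have hψ : HasDerivAt (fun t : ℝ => fderiv ℝ h (x₀ + t • v))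
      (fderiv ℝ (fderiv ℝ h) x₀ v) 0 := by
    have h1 : HasFDerivAt (fderiv ℝ h) (fderiv ℝ (fderiv ℝ h) x₀) ((fun t : ℝ => x₀ + t • v) 0) := by
      rw [hline0]; exact hdh2.hasFDerivAt
    exact h1.comp_hasDerivAt 0 (hL 0)
  have hψv : HasDerivAt (fun t : ℝ => fderiv ℝ h (x₀ + t • v) v)
      (fderiv ℝ (fderiv ℝ h) x₀ v v) 0 := by
    have := (ContinuousLinearMap.apply ℝ ℝ v).hasFDerivAt.comp_hasDerivAt 0 hψ
    exact this
  have hc : HasDerivAt (deriv φ) (fderiv ℝ (fderiv ℝ h) x₀ v v) 0 :=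
    hψv.congr_of_eventuallyEq hφderiv
  have hnn : 0 ≤ fderiv ℝ (fderiv ℝ h) x₀ v v :=
    second_deriv_nonneg_of_isLocalMin_s4 hφdiff hminφ hc
  have := hg'' v hv
  have hHvv : fderiv ℝ (fderiv ℝ h) x₀ v v =
      fderiv ℝ (fderiv ℝ g) x₀ v v - fderiv ℝ (fderiv ℝ f) x₀ v v := by
    rw [hH]; simp
  linarith
end
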